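/- arXiv:1303.7152 — 2 statements merged into one kernel-verified Lean document; each statement's English description precedes it below -/
import Mathlib

section
/- Let G1 be a VC(b1,a1,v1) type class and G2 a VC(b2,a2,v2) type class of measurable functions on a measurable space (S, S). Set a = (a1^{v1} * a2^{v2})^{1/(v1+v2)}. Then the product class G1·G2 = {g1*g2 : g1 in G1, g2 in G2} is a VC(b1*b2, 2a, v1+v2) type class. -/
open MeasureTheory

/-- `G` can be covered by `n` balls of `L²(Q)`-radius `ε`. -/
def CoveredBy {S : Type*} [MeasurableSpace S] (G : Set (S → ℝ)) (Q : Measure S)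
    (ε : ℝ) (n : ℕ) : Prop :=
  ∃ c : Fin n → S → ℝ, ∀ g ∈ G, ∃ i, ∫ x, (g x - c i x) ^ 2 ∂Q ≤ ε ^ 2

/-- A finitely discrete measure: supported on a finite set. -/
def FinitelyDiscrete {S : Type*} [MeasurableSpace S] (Q : Measure S) : Prop :=
  ∃ s : Finset S, Q ((↑s : Set S)ᶜ) = 0

/-- `G` is a VC(b,a,v) type class: uniformly bounded by `b` and with
uniform `L²(Q)` covering numbers `N(G, L₂(Q), bτ) ≤ (a/τ)^v` over all finitely
discrete probability measures `Q`. -/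
def VCType {S : Type*} [MeasurableSpace S] (G : Set (S → ℝ)) (b a v : ℝ) : Prop :=
  (0 < b ∧ Real.exp 1 ≤ a ∧ 1 ≤ v) ∧
  (∀ g ∈ G, ∀ x, |g x| ≤ b) ∧
  ∀ Q : Measure S, IsProbabilityMeasure Q → FinitelyDiscrete Q →
    ∀ τ : ℝ, 0 < τ → τ < 1 →
      ∃ n : ℕ, (n : ℝ) ≤ (a / τ) ^ v ∧ CoveredBy G Q (b * τ) n

/-!
Cover `G1` and `G2` at scale `τ / 2` and multiply the centers, after clamping those of `G2` to
`[-b2, b2]`: from `g1 g2 - c1 c2 = g1 (g2 - c2) + c2 (g1 - c1)` the `n1 n2` products cover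
`G1 · G2` at scale `b1 b2 τ`, and `n1 n2 ≤ (a1 / (τ/2))^v1 (a2 / (τ/2))^v2 = (2a/τ)^(v1+v2)`.

The covering radii are Bochner integrals, which are `0` on non-integrable functions. If `Q`
charges a point `x` that no measurable set separates from some `y ≠ x`, no function taking
different values at `x` and `y` is a.e. strongly measurable, so a single such center covers
everything. Otherwise the atoms of `Q` are measurably isolated within its finite support and
every function is `Q`-integrable, so the estimate above is genuine.
-/

open Pointwise

def MeasurablyInseparable {S : Type*} [MeasurableSpace S] (x y : S) : Prop :=
  ∀ u : Set S, MeasurableSet u → (x ∈ u ↔ y ∈ u)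

section MeasurablyInseparable

variable {S : Type*} [MeasurableSpace S] {x y : S}

lemma MeasurablyInseparable.measure_singleton_le (h : MeasurablyInseparable x y)
    (Q : Measure S) : Q {x} ≤ Q {y} := by
  have hx : x ∈ toMeasurable Q {y} :=
    (h _ (measurableSet_toMeasurable Q _)).2 (subset_toMeasurable Q _ rfl)
  calc Q {x} ≤ Q (toMeasurable Q {y}) := measure_mono (Set.singleton_subset_iff.2 hx)
    _ = Q {y} := measure_toMeasurable _

lemma MeasureTheory.StronglyMeasurable.apply_eq_of_measurablyInseparable {β : Type*}
    [TopologicalSpace β] [T2Space β] {f : S → β} (hf : StronglyMeasurable f)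
    (h : MeasurablyInseparable x y) : f x = f y := by
  have happrox (n : ℕ) : hf.approx n x = hf.approx n y :=
    ((h _ ((hf.approx n).measurableSet_fiber (hf.approx n x))).1 rfl).symm
  exact tendsto_nhds_unique (hf.tendsto_approx x)
    (by simpa only [happrox] using hf.tendsto_approx y)

lemma Filter.EventuallyEq.eq_of_measure_singleton_ne_zero {β : Type*} {Q : Measure S}
    {f g : S → β} (h : f =ᵐ[Q] g) (hx : Q {x} ≠ 0) : f x = g x := by
  by_contra hne
  exact hx (measure_mono_null (Set.singleton_subset_iff.2 hne) (ae_iff.1 h))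

lemma MeasureTheory.AEStronglyMeasurable.apply_eq_of_measurablyInseparable {β : Type*}
    [TopologicalSpace β] [T2Space β] {Q : Measure S} {f : S → β}
    (hf : AEStronglyMeasurable f Q) (h : MeasurablyInseparable x y) (hx : Q {x} ≠ 0) :
    f x = f y := by
  have hy : Q {y} ≠ 0 := fun hy => hx (le_antisymm (hy ▸ h.measure_singleton_le Q) bot_le)
  calc f x = hf.mk f x := hf.ae_eq_mk.eq_of_measure_singleton_ne_zero hx
    _ = hf.mk f y := hf.stronglyMeasurable_mk.apply_eq_of_measurablyInseparable h
    _ = f y := (hf.ae_eq_mk.eq_of_measure_singleton_ne_zero hy).symm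

lemma exists_measurableSet_of_not_measurablyInseparable (h : ¬ MeasurablyInseparable x y) :
    ∃ u, MeasurableSet u ∧ x ∈ u ∧ y ∉ u := by
  by_contra! hxy
  refine h fun u hu => ⟨hxy u hu, fun hyu => ?_⟩
  by_contra hxu
  exact hxy uᶜ hu.compl hxu hyu

lemma exists_measurableSet_forall_mem_finset_eq (s : Finset S)
    (hx : ∀ y ∈ s, y ≠ x → ¬ MeasurablyInseparable x y) :
    ∃ W, MeasurableSet W ∧ x ∈ W ∧ ∀ y ∈ s, y ∈ W → y = x := by
  classical
  have hsep : ∀ y ∈ s.erase x, ∃ u, MeasurableSet u ∧ x ∈ u ∧ y ∉ u := fun y hy =>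
    exists_measurableSet_of_not_measurablyInseparable
      (hx y (Finset.mem_of_mem_erase hy) (Finset.ne_of_mem_erase hy))
  choose! u hu hxu hyu using hsep
  refine ⟨⋂ y ∈ s.erase x, u y, Finset.measurableSet_biInter _ hu, Set.mem_iInter₂.2 hxu,
    fun y hy hyW => ?_⟩
  by_contra hne
  have hy' : y ∈ s.erase x := Finset.mem_erase.2 ⟨hne, hy⟩
  exact hyu y hy' (Set.mem_iInter₂.1 hyW y hy')

theorem integrable_of_finitelyDiscrete {Q : Measure S} [IsFiniteMeasure Q]
    (hQ : FinitelyDiscrete Q)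
    (hatoms : ∀ x y : S, x ≠ y → MeasurablyInseparable x y → Q {x} = 0) (f : S → ℝ) :
    Integrable f Q := by
  classical
  obtain ⟨s, hs⟩ := hQ
  set F := s.filter fun x => Q {x} ≠ 0
  have hF : ∀ᵐ z ∂Q, z ∈ F := by
    have hnull : Q ((↑s)ᶜ ∪ ⋃ x ∈ s.filter fun x => Q {x} = 0, {x}) = 0 :=
      measure_union_null hs <| (measure_biUnion_null_iff (Finset.countable_toSet _)).2
        fun x hx => (Finset.mem_filter.1 hx).2
    refine measure_mono_null (fun z hz => ?_) hnull
    by_cases hzs : z ∈ s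
    · exact Or.inr (Set.mem_biUnion (Finset.mem_filter.2 ⟨hzs, not_not.1 fun h0 =>
        hz (Finset.mem_filter.2 ⟨hzs, h0⟩)⟩) rfl)
    · exact Or.inl hzs
  have hW (x) (hx : x ∈ F) :
      ∃ W, MeasurableSet W ∧ x ∈ W ∧ ∀ y ∈ s, y ∈ W → y = x :=
    exists_measurableSet_forall_mem_finset_eq s fun y _ hyx hxy =>
      (Finset.mem_filter.1 hx).2 (hatoms x y hyx.symm hxy)
  choose! W hWm hxW hWx using hW
  refine (integrable_finsetSum' F fun x hx =>
    (integrable_const (f x)).indicator (hWm x hx)).congr ?_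
  filter_upwards [hF] with z hz
  rw [Finset.sum_apply, Finset.sum_eq_single_of_mem z hz
    fun x hx hxz => Set.indicator_of_notMem
      (fun hzW => hxz (hWx x hx z (Finset.mem_filter.1 hz).1 hzW).symm) _]
  exact Set.indicator_of_mem (hxW z hz) _

theorem coveredBy_one_of_measurablyInseparable {G : Set (S → ℝ)} {B : ℝ}
    (hG : ∀ g ∈ G, ∀ z, |g z| ≤ B) {Q : Measure S} (hxy : x ≠ y)
    (h : MeasurablyInseparable x y) (hx : Q {x} ≠ 0) (ε : ℝ) : CoveredBy G Q ε 1 := by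
  classical
  refine ⟨fun _ z => if z = y then 2 * B + 1 else 0, fun g hg => ⟨0, ?_⟩⟩
  have hsep : (g x - 0) ^ 2 ≠ (g y - (2 * B + 1)) ^ 2 := by
    have := abs_le.1 (hG g hg x)
    have := abs_le.1 (hG g hg y)
    intro heq
    nlinarith
  rw [integral_undef fun hint => hsep ?_]
  · positivity
  · simpa [hxy] using hint.aestronglyMeasurable.apply_eq_of_measurablyInseparable h hx

end MeasurablyInseparable

lemma abs_sub_max_min_le {b g c : ℝ} (hg : |g| ≤ b) : |g - max (-b) (min b c)| ≤ |g - c| := by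
  rcases abs_le.1 hg with ⟨hg₁, hg₂⟩
  rcases le_total c (-b) with hc | hc
  · rw [max_eq_left (min_le_right _ _ |>.trans hc), abs_of_nonneg (by linarith),
      abs_of_nonneg (by linarith)]
    linarith
  rcases le_total c b with hc' | hc'
  · rw [min_eq_right hc', max_eq_right hc]
  · rw [min_eq_left hc', max_eq_right (by linarith), abs_of_nonpos (by linarith),
      abs_of_nonpos (by linarith)]
    linarith

lemma abs_max_min_le {b c : ℝ} (hb : 0 ≤ b) : |max (-b) (min b c)| ≤ b :=
  abs_le.2 ⟨le_max_left _ _, max_le (by linarith) (min_le_left _ _)⟩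

lemma sq_mul_sub_mul_le {b1 b2 g1 g2 c1 c2 : ℝ} (hg1 : |g1| ≤ b1) (hc2 : |c2| ≤ b2) :
    (g1 * g2 - c1 * c2) ^ 2 ≤ 2 * b2 ^ 2 * (g1 - c1) ^ 2 + 2 * b1 ^ 2 * (g2 - c2) ^ 2 := by
  have hg1' : g1 ^ 2 ≤ b1 ^ 2 := sq_le_sq.2 (hg1.trans (le_abs_self b1))
  have hc2' : c2 ^ 2 ≤ b2 ^ 2 := sq_le_sq.2 (hc2.trans (le_abs_self b2))
  calc (g1 * g2 - c1 * c2) ^ 2 = (g1 * (g2 - c2) + c2 * (g1 - c1)) ^ 2 := by ring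
    _ ≤ 2 * ((g1 * (g2 - c2)) ^ 2 + (c2 * (g1 - c1)) ^ 2) := add_sq_le
    _ = 2 * g1 ^ 2 * (g2 - c2) ^ 2 + 2 * c2 ^ 2 * (g1 - c1) ^ 2 := by ring
    _ ≤ 2 * b2 ^ 2 * (g1 - c1) ^ 2 + 2 * b1 ^ 2 * (g2 - c2) ^ 2 := by
      rw [add_comm]; gcongr

lemma abs_apply_le_of_mem_mul {S : Type*} {G1 G2 : Set (S → ℝ)} {b1 b2 : ℝ}
    (hG1 : ∀ g ∈ G1, ∀ z, |g z| ≤ b1)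
    (hG2 : ∀ g ∈ G2, ∀ z, |g z| ≤ b2) : ∀ g ∈ G1 * G2, ∀ z, |g z| ≤ b1 * b2 := by
  rintro _ ⟨g1, hg1, g2, hg2, rfl⟩ z
  show |g1 z * g2 z| ≤ b1 * b2
  rw [abs_mul]
  exact mul_le_mul (hG1 g1 hg1 z) (hG2 g2 hg2 z) (abs_nonneg _)
    ((abs_nonneg _).trans (hG1 g1 hg1 z))

theorem CoveredBy.mul {S : Type*} [MeasurableSpace S] {G1 G2 : Set (S → ℝ)} {Q : Measure S}
    {b1 b2 ε1 ε2 ε : ℝ} {n1 n2 : ℕ}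
    (h1 : CoveredBy G1 Q ε1 n1) (h2 : CoveredBy G2 Q ε2 n2)
    (hG1 : ∀ g ∈ G1, ∀ z, |g z| ≤ b1) (hG2 : ∀ g ∈ G2, ∀ z, |g z| ≤ b2)
    (hint : ∀ f : S → ℝ, Integrable f Q)
    (hε : 2 * b2 ^ 2 * ε1 ^ 2 + 2 * b1 ^ 2 * ε2 ^ 2 ≤ ε ^ 2) :
    CoveredBy (G1 * G2) Q ε (n1 * n2) := by
  obtain ⟨c1, hc1⟩ := h1
  obtain ⟨c2, hc2⟩ := h2
  -- clamping the second centers to `[-b2, b2]` keeps them close to `G2` and makes them bounded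
  refine ⟨fun k z => c1 (finProdFinEquiv.symm k).1 z *
    max (-b2) (min b2 (c2 (finProdFinEquiv.symm k).2 z)), ?_⟩
  rintro _ ⟨g1, hg1, g2, hg2, rfl⟩
  obtain ⟨i, hi⟩ := hc1 g1 hg1
  obtain ⟨j, hj⟩ := hc2 g2 hg2
  refine ⟨finProdFinEquiv (i, j), ?_⟩
  simp only [Equiv.symm_apply_apply, Pi.mul_apply]
  have hpoint (z : S) : (g1 z * g2 z - c1 i z * max (-b2) (min b2 (c2 j z))) ^ 2 ≤
      2 * b2 ^ 2 * (g1 z - c1 i z) ^ 2 + 2 * b1 ^ 2 * (g2 z - c2 j z) ^ 2 := by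
    have hb2 : 0 ≤ b2 := (abs_nonneg _).trans (hG2 g2 hg2 z)
    refine (sq_mul_sub_mul_le (hG1 g1 hg1 z) (abs_max_min_le hb2)).trans ?_
    gcongr 2 * b2 ^ 2 * (g1 z - c1 i z) ^ 2 + 2 * b1 ^ 2 * ?_
    exact sq_le_sq.2 (abs_sub_max_min_le (hG2 g2 hg2 z))
  calc ∫ z, (g1 z * g2 z - c1 i z * max (-b2) (min b2 (c2 j z))) ^ 2 ∂Q
      ≤ ∫ z, 2 * b2 ^ 2 * (g1 z - c1 i z) ^ 2 + 2 * b1 ^ 2 * (g2 z - c2 j z) ^ 2 ∂Q :=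
        integral_mono (hint _) (hint _) hpoint
    _ = 2 * b2 ^ 2 * ∫ z, (g1 z - c1 i z) ^ 2 ∂Q
        + 2 * b1 ^ 2 * ∫ z, (g2 z - c2 j z) ^ 2 ∂Q := by
      rw [integral_add (hint _) (hint _), integral_const_mul, integral_const_mul]
    _ ≤ 2 * b2 ^ 2 * ε1 ^ 2 + 2 * b1 ^ 2 * ε2 ^ 2 := by gcongr
    _ ≤ ε ^ 2 := hε

lemma natCast_mul_le_rpow {n1 n2 : ℕ} {a1 a2 t v1 v2 : ℝ} (ha1 : 0 ≤ a1) (ha2 : 0 ≤ a2)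
    (ht : 0 ≤ t) (hv : v1 + v2 ≠ 0) (hn1 : (n1 : ℝ) ≤ (a1 / t) ^ v1)
    (hn2 : (n2 : ℝ) ≤ (a2 / t) ^ v2) :
    ((n1 * n2 : ℕ) : ℝ) ≤ ((a1 ^ v1 * a2 ^ v2) ^ (1 / (v1 + v2)) / t) ^ (v1 + v2) :=
  calc ((n1 * n2 : ℕ) : ℝ) ≤ (a1 / t) ^ v1 * (a2 / t) ^ v2 := by
        push_cast
        exact mul_le_mul hn1 hn2 (Nat.cast_nonneg _) (by positivity)
    _ = ((a1 ^ v1 * a2 ^ v2) ^ (1 / (v1 + v2)) / t) ^ (v1 + v2) := by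
        rw [Real.div_rpow ha1 ht, Real.div_rpow ha2 ht, Real.div_rpow (by positivity) ht,
          ← Real.rpow_mul (by positivity), one_div_mul_cancel hv, Real.rpow_one,
          Real.rpow_add' ht hv]
        ring

lemma setOf_exists_mul_eq_mul {S : Type*} (G1 G2 : Set (S → ℝ)) :
    {h : S → ℝ | ∃ g1 ∈ G1, ∃ g2 ∈ G2, h = fun x => g1 x * g2 x} = G1 * G2 := by
  ext h
  simp only [Set.mem_ofPred_eq, Set.mem_mul, eq_comm (a := h)]
  rfl

lemma le_mul_rpow_rpow_one_div {c a1 a2 v1 v2 : ℝ} (hc : 0 ≤ c) (h1 : c ≤ a1) (h2 : c ≤ a2)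
    (hv1 : 0 ≤ v1) (hv2 : 0 ≤ v2) (hv : 0 < v1 + v2) :
    c ≤ (a1 ^ v1 * a2 ^ v2) ^ (1 / (v1 + v2)) :=
  calc c = (c ^ v1 * c ^ v2) ^ (1 / (v1 + v2)) := by
        rw [← Real.rpow_add' hc hv.ne', ← Real.rpow_mul hc, mul_one_div_cancel hv.ne',
          Real.rpow_one]
    _ ≤ (a1 ^ v1 * a2 ^ v2) ^ (1 / (v1 + v2)) := by
        gcongr
        exact Real.rpow_nonneg (hc.trans h1) _

/-- The product class of two VC type classes is VC type:
`G₁·G₂` is VC(b₁b₂, 2a, v₁+v₂) with `a = (a₁^{v₁} a₂^{v₂})^{1/(v₁+v₂)}`. -/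
theorem vcType_product {S : Type*} [MeasurableSpace S]
    (G1 G2 : Set (S → ℝ)) (b1 a1 v1 b2 a2 v2 a : ℝ)
    (h1 : VCType G1 b1 a1 v1) (h2 : VCType G2 b2 a2 v2)
    (ha : a = (a1 ^ v1 * a2 ^ v2) ^ (1 / (v1 + v2))) :
    VCType {h : S → ℝ | ∃ g1 ∈ G1, ∃ g2 ∈ G2, h = fun x => g1 x * g2 x}
      (b1 * b2) (2 * a) (v1 + v2) := by
  obtain ⟨⟨hb1, ha1, hv1⟩, hG1, hcov1⟩ := h1
  obtain ⟨⟨hb2, ha2, hv2⟩, hG2, hcov2⟩ := h2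
  have he : 2 ≤ Real.exp 1 := by linarith [Real.add_one_le_exp 1]
  have hae : Real.exp 1 ≤ a :=
    ha ▸ le_mul_rpow_rpow_one_div (Real.exp_pos 1).le ha1 ha2 (by linarith) (by linarith)
      (by linarith)
  rw [setOf_exists_mul_eq_mul]
  refine ⟨⟨mul_pos hb1 hb2, by linarith, by linarith⟩, abs_apply_le_of_mem_mul hG1 hG2,
    fun Q hQ hfd τ hτ hτ1 => ?_⟩
  by_cases hatom : ∃ x y, x ≠ y ∧ MeasurablyInseparable x y ∧ Q {x} ≠ 0
  · obtain ⟨x, y, hxy, hins, hx⟩ := hatom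
    refine ⟨1, ?_, coveredBy_one_of_measurablyInseparable (abs_apply_le_of_mem_mul hG1 hG2)
      hxy hins hx _⟩
    simpa using Real.one_le_rpow ((one_le_div hτ).2 (by linarith)) (by linarith)
  · push Not at hatom
    obtain ⟨n1, hn1, hc1⟩ := hcov1 Q hQ hfd (τ / 2) (by linarith) (by linarith)
    obtain ⟨n2, hn2, hc2⟩ := hcov2 Q hQ hfd (τ / 2) (by linarith) (by linarith)
    refine ⟨n1 * n2, ?_, hc1.mul hc2 hG1 hG2 (integrable_of_finitelyDiscrete hfd hatom)
      (le_of_eq (by ring))⟩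
    have hcount := natCast_mul_le_rpow (n1 := n1) (n2 := n2) (by linarith) (by linarith)
      (by linarith : (0 : ℝ) ≤ τ / 2) (by linarith) hn1 hn2
    rwa [← ha, div_div_eq_mul_div, mul_comm a] at hcount
end

section
/- Let W_n, W_n^0 be random variables on a common probability space and let c: (0,1) -> R be the quantile function of W_n^0 (i.e., c(alpha) is the (1-alpha)-quantile of W_n^0). Let hat_c be a nonnegative random variable, and suppose: (a) P(|W_n - W_n^0| > eps1) <= delta1; (b) P(hat_c < c(alpha + tau) - eps2) <= delta2. Then P(W_n <= hat_c + eps1 + eps2) >= 1 - alpha - tau - delta1 - delta2 - p, where p = P(c(alpha+tau) - eps1 - eps2 <= W_n^0 <= c(alpha+tau)) is an anti-concentration term, for any alpha in (0,1), tau >= 0 with alpha + tau < 1, and eps1, eps2 >= 0. -/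
open MeasureTheory ProbabilityTheory Filter Topology Set

/-! On the event where `W0 ≤ c(α + τ)`, `|W - W0| ≤ ε1` and `ĉ ≥ c(α + τ) - ε2`, we have
`W ≤ W0 + ε1 ≤ ĉ + ε1 + ε2`; a union bound together with `P(W0 ≤ c(α + τ)) ≥ 1 - α - τ`
gives `P(W ≤ ĉ + ε1 + ε2) ≥ 1 - α - τ - δ1 - δ2`, and the anti-concentration probability is
nonnegative. The quantile inequality is right-continuity of the distribution function at the
infimum. -/

theorem StieltjesFunction.le_apply_sInf (F : StieltjesFunction ℝ) {t : ℝ}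
    (hne : {x | t ≤ F x}.Nonempty) (hbdd : BddBelow {x | t ≤ F x}) :
    t ≤ F (sInf {x | t ≤ F x}) := by
  have hright : Tendsto F (𝓝[>] (sInf {x | t ≤ F x})) (𝓝 (F (sInf {x | t ≤ F x}))) :=
    (F.right_continuous _).mono Ioi_subset_Ici_self
  refine ge_of_tendsto hright (eventually_nhdsWithin_of_forall fun x hx => ?_)
  obtain ⟨y, hy, hyx⟩ := (csInf_lt_iff hbdd hne).1 hx
  exact hy.trans (F.mono hyx.le)

theorem ProbabilityTheory.le_cdf_sInf (μ : Measure ℝ) {t : ℝ} (ht : t ∈ Ioo 0 1) :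
    t ≤ cdf μ (sInf {x | t ≤ cdf μ x}) := by
  refine (cdf μ).le_apply_sInf ?_ ?_
  · exact ((tendsto_cdf_atTop μ).eventually (eventually_ge_nhds ht.2)).exists
  · obtain ⟨b, hb⟩ :=
      ((tendsto_cdf_atBot μ).eventually (eventually_lt_nhds ht.1)).exists_forall_of_atBot
    exact ⟨b, fun x hx => not_lt.1 fun hxb => (hb x hxb.le).not_ge hx⟩

theorem ProbabilityTheory.le_measureReal_Iic_sInf (μ : Measure ℝ) [IsProbabilityMeasure μ]
    {t : ℝ} (ht : t ∈ Ioo 0 1) :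
    t ≤ μ.real (Iic (sInf {x | ENNReal.ofReal t ≤ μ (Iic x)})) := by
  simp_rw [← ofReal_cdf, ENNReal.ofReal_le_ofReal_iff (cdf_nonneg μ _), ← cdf_eq_real]
  exact le_cdf_sInf μ ht

theorem le_measureReal_le_quantile {Ω : Type*} [MeasurableSpace Ω] (P : Measure Ω)
    [IsProbabilityMeasure P] {X : Ω → ℝ} (hX : Measurable X) {t : ℝ} (ht : t ∈ Ioo 0 1) :
    t ≤ P.real {ω | X ω ≤ sInf {x | ENNReal.ofReal t ≤ P {ω | X ω ≤ x}}} := by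
  have := Measure.isProbabilityMeasure_map (μ := P) hX.aemeasurable
  have h := le_measureReal_Iic_sInf (P.map X) ht
  simp_rw [Measure.map_apply hX measurableSet_Iic, map_measureReal_apply hX measurableSet_Iic]
    at h
  exact h

theorem measureReal_le_le_coverage_add_errors {Ω : Type*} [MeasurableSpace Ω] (P : Measure Ω)
    [IsFiniteMeasure P] (W W0 chat : Ω → ℝ) (q ε1 ε2 : ℝ) :
    P.real {ω | W0 ω ≤ q} ≤ P.real {ω | W ω ≤ chat ω + ε1 + ε2} +
      P.real {ω | ε1 < |W ω - W0 ω|} + P.real {ω | chat ω < q - ε2} := by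
  have hcover : {ω | W0 ω ≤ q} ⊆ ({ω | W ω ≤ chat ω + ε1 + ε2} ∪
      {ω | ε1 < |W ω - W0 ω|}) ∪ {ω | chat ω < q - ε2} := by
    intro ω hq
    by_contra! h
    simp only [mem_union, mem_ofPred_eq, not_or, not_lt, not_le] at h hq
    linarith [(abs_le.1 h.1.2).2]
  exact (measureReal_mono hcover).trans <|
    (measureReal_union_le _ _).trans (add_le_add_left (measureReal_union_le _ _) _)

theorem coverage_from_coupling_and_quantile_general
    {Ω : Type*} [MeasurableSpace Ω] (P : Measure Ω) [IsProbabilityMeasure P]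
    (W W0 chat : Ω → ℝ)
    (hW0 : Measurable W0)
    -- c is the quantile function of W0: c(α) is the (1-α)-quantile of W0
    (c : ℝ → ℝ)
    (hc : ∀ α ∈ Set.Ioo (0 : ℝ) 1,
      c α = sInf {x : ℝ | ENNReal.ofReal (1 - α) ≤ P {ω | W0 ω ≤ x}})
    (α τ ε1 ε2 δ1 δ2 : ℝ)
    (hα : α ∈ Set.Ioo (0 : ℝ) 1) (hτ : 0 ≤ τ) (hατ : α + τ < 1)
    -- (a) coupling bound
    (ha : (P {ω | ε1 < |W ω - W0 ω|}).toReal ≤ δ1)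
    -- (b) quantile comparison bound for the estimated critical value
    (hb : (P {ω | chat ω < c (α + τ) - ε2}).toReal ≤ δ2) :
    1 - α - τ - δ1 - δ2 -
        (P {ω | c (α + τ) - ε1 - ε2 ≤ W0 ω ∧ W0 ω ≤ c (α + τ)}).toReal ≤
      (P {ω | W ω ≤ chat ω + ε1 + ε2}).toReal := by
  have hlevel : α + τ ∈ Ioo 0 1 := ⟨by linarith [hα.1], hατ⟩
  have hquantile : 1 - (α + τ) ≤ P.real {ω | W0 ω ≤ c (α + τ)} := by
    rw [hc _ hlevel]
    exact le_measureReal_le_quantile P hW0 ⟨by linarith [hlevel.2], by linarith [hlevel.1]⟩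
  have hunion := measureReal_le_le_coverage_add_errors P W W0 chat (c (α + τ)) ε1 ε2
  have hanti := measureReal_nonneg (μ := P)
    (s := {ω | c (α + τ) - ε1 - ε2 ≤ W0 ω ∧ W0 ω ≤ c (α + τ)})
  simp only [← measureReal_def] at ha hb ⊢
  linarith

/-- Generic coverage bound: a Gaussian coupling bound, a quantile comparison bound
for the estimated critical value, and an anti-concentration term for the Gaussian
proxy near its quantile yield a lower bound on the coverage probability. -/
theorem coverage_from_coupling_and_quantile
    {Ω : Type*} [MeasurableSpace Ω] (P : Measure Ω) [IsProbabilityMeasure P]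
    (W W0 chat : Ω → ℝ)
    (hW : Measurable W) (hW0 : Measurable W0) (hchatm : Measurable chat)
    (hchat : ∀ ω, 0 ≤ chat ω)
    -- c is the quantile function of W0: c(α) is the (1-α)-quantile of W0
    (c : ℝ → ℝ)
    (hc : ∀ α ∈ Set.Ioo (0 : ℝ) 1,
      c α = sInf {x : ℝ | ENNReal.ofReal (1 - α) ≤ P {ω | W0 ω ≤ x}})
    (α τ ε1 ε2 δ1 δ2 : ℝ)
    (hα : α ∈ Set.Ioo (0 : ℝ) 1) (hτ : 0 ≤ τ) (hατ : α + τ < 1)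
    (hε1 : 0 ≤ ε1) (hε2 : 0 ≤ ε2)
    -- (a) coupling bound
    (ha : (P {ω | ε1 < |W ω - W0 ω|}).toReal ≤ δ1)
    -- (b) quantile comparison bound for the estimated critical value
    (hb : (P {ω | chat ω < c (α + τ) - ε2}).toReal ≤ δ2) :
    1 - α - τ - δ1 - δ2 -
        (P {ω | c (α + τ) - ε1 - ε2 ≤ W0 ω ∧ W0 ω ≤ c (α + τ)}).toReal ≤
      (P {ω | W ω ≤ chat ω + ε1 + ε2}).toReal :=
  coverage_from_coupling_and_quantile_general P W W0 chat hW0 c hc α τ ε1 ε2 δ1 δ2 hα hτ hατ ha hb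
end
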